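/- arXiv:1605.07730 — 7 statements merged into one kernel-verified Lean document; each statement's English description precedes it below -/
import Mathlib

section
/- Let G be a K×K lower triangular real matrix with rows g_1,…,g_K and diagonal entries g_{i,i}. Let W be an m-dimensional subspace of ℝ^K with 1 ≤ m < K, and let P be the orthogonal projection of ℝ^K onto W. Then ∏_{i=1}^K g_{i,i}^2 ≤ ( (1/m) ∑_{i=1}^K ‖P g_i‖² )^m · ( (1/(K−m)) ∑_{i=1}^K ‖g_i − P g_i‖² )^{K−m}, where ‖·‖ denotes the Euclidean norm on ℝ^K. -/
/-!
Scaling `W` by `√s` and `Wᗮ` by `√t` multiplies `det g` by `√s ^ m * √t ^ (K - m)` and turns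
`‖g i‖ ^ 2` into `s * ‖P g i‖ ^ 2 + t * ‖g i - P g i‖ ^ 2`. Hadamard's inequality and AM-GM bound
the squared determinant of the scaled rows by the `K`-th power of their mean squared norm, and
`s = m / X`, `t = (K - m) / Y` (with `X`, `Y` the two sums) make that mean `1`. Since `G` is lower
triangular, `det g = ∏ i, G i i`. If `X` or `Y` vanishes, the rows lie in a proper subspace and
`det g = 0`.
-/

open Module Finset

theorem Real.prod_le_arith_mean_pow {ι : Type*} (s : Finset ι) (z : ι → ℝ)
    (hz : ∀ i ∈ s, 0 ≤ z i) : ∏ i ∈ s, z i ≤ ((∑ i ∈ s, z i) / #s) ^ #s := by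
  rcases s.eq_empty_or_nonempty with rfl | hs
  · simp
  have hcard : (0 : ℝ) < #s := by exact_mod_cast hs.card_pos
  have amgm := Real.geom_mean_le_arith_mean_weighted s (fun _ ↦ (#s : ℝ)⁻¹) z
    (fun _ _ ↦ by positivity) (by simp [hcard.ne']) hz
  rw [← Finset.mul_sum, inv_mul_eq_div] at amgm
  calc ∏ i ∈ s, z i = (∏ i ∈ s, z i ^ (#s : ℝ)⁻¹) ^ #s := by
        rw [← Finset.prod_pow]
        refine Finset.prod_congr rfl fun i hi ↦ ?_
        rw [← Real.rpow_natCast, ← Real.rpow_mul (hz i hi), inv_mul_cancel₀ hcard.ne',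
          Real.rpow_one]
    _ ≤ ((∑ i ∈ s, z i) / #s) ^ #s :=
        pow_le_pow_left₀ (Finset.prod_nonneg fun i hi ↦ Real.rpow_nonneg (hz i hi) _) amgm _

theorem LinearMap.det_eq_pow_mul_pow_of_isCompl {K V : Type*} [Field K] [AddCommGroup V]
    [Module K V] [FiniteDimensional K V] {p q : Submodule K V} (hpq : IsCompl p q)
    {T : V →ₗ[K] V} {a b : K} (hp : ∀ x ∈ p, T x = a • x) (hq : ∀ x ∈ q, T x = b • x) :
    T.det = a ^ finrank K p * b ^ finrank K q := by
  let e := p.prodEquivOfIsCompl q hpq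
  have hT : T = e.toLinearMap ∘ₗ (a • LinearMap.id).prodMap (b • LinearMap.id) ∘ₗ
      e.symm.toLinearMap := by
    rw [← LinearMap.comp_assoc, LinearEquiv.eq_comp_toLinearMap_symm]
    ext x <;> simp [e, hp, hq]
  rw [hT, LinearMap.det_conj, LinearMap.det_prodMap, LinearMap.det_smul, LinearMap.det_smul,
    LinearMap.det_id, LinearMap.det_id, mul_one, mul_one]

theorem Module.Basis.det_eq_zero_of_forall_mem {ι K V : Type*} [Fintype ι] [DecidableEq ι]
    [Field K] [AddCommGroup V] [Module K V] (e : Basis ι K V) {v : ι → V} {U : Submodule K V}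
    [FiniteDimensional K U] (hv : ∀ i, v i ∈ U) (hU : finrank K U < Fintype.card ι) :
    e.det v = 0 :=
  e.det.map_linearDependent v fun hli ↦ hU.not_ge <|
    finrank_span_eq_card hli ▸ Submodule.finrank_mono (Submodule.span_le.mpr <| by
      rintro _ ⟨i, rfl⟩; exact hv i)

theorem EuclideanSpace.basisFun_toBasis_det {ι : Type*} [Fintype ι] [DecidableEq ι]
    (v : ι → EuclideanSpace ℝ ι) :
    (EuclideanSpace.basisFun ι ℝ).toBasis.det v = (Matrix.of fun i j ↦ v i j).det := by
  rw [Basis.det_apply, ← Matrix.det_transpose]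
  rfl

section InnerProductSpace

variable {E : Type*} [NormedAddCommGroup E] [InnerProductSpace ℝ E]

theorem OrthonormalBasis.abs_det_le_prod_norm {n : ℕ} (b : OrthonormalBasis (Fin n) ℝ E)
    (v : Fin n → E) : |b.toBasis.det v| ≤ ∏ i, ‖v i‖ := by
  have : Fact (finrank ℝ E = n) := ⟨by simpa using finrank_eq_card_basis b.toBasis⟩
  rw [← b.toBasis.orientation.volumeForm_robust b rfl]
  exact Orientation.abs_volumeForm_apply_le _ v

namespace Submodule

variable (W : Submodule ℝ E) [W.HasOrthogonalProjection]

noncomputable def orthogonalScaling (a b : ℝ) : E →L[ℝ] E :=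
  a • W.starProjection + b • Wᗮ.starProjection

theorem norm_orthogonalScaling_sq (a b : ℝ) (x : E) :
    ‖W.orthogonalScaling a b x‖ ^ 2 =
      a ^ 2 * ‖W.starProjection x‖ ^ 2 + b ^ 2 * ‖Wᗮ.starProjection x‖ ^ 2 := by
  have horth : inner ℝ (a • W.starProjection x) (b • Wᗮ.starProjection x) = 0 :=
    inner_right_of_mem_orthogonal (W.smul_mem a (W.starProjection_apply_mem x))
      (Wᗮ.smul_mem b (Wᗮ.starProjection_apply_mem x))
  simp only [orthogonalScaling, add_apply, smul_apply, sq,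
    norm_add_sq_eq_norm_sq_add_norm_sq_real horth, norm_smul, Real.norm_eq_abs]
  nlinarith [abs_mul_abs_self a, abs_mul_abs_self b]

theorem det_orthogonalScaling [FiniteDimensional ℝ E] (a b : ℝ) :
    LinearMap.det (W.orthogonalScaling a b : E →ₗ[ℝ] E) =
      a ^ finrank ℝ W * b ^ finrank ℝ Wᗮ :=
  LinearMap.det_eq_pow_mul_pow_of_isCompl W.isCompl_orthogonal
    (fun x hx ↦ by simp [orthogonalScaling, starProjection_eq_self_iff.mpr hx])
    (fun x hx ↦ by simp [orthogonalScaling, starProjection_eq_self_iff.mpr hx,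
      (starProjection_apply_eq_zero_iff W).mpr hx])

end Submodule

namespace OrthonormalBasis

variable [FiniteDimensional ℝ E] {n : ℕ} (b : OrthonormalBasis (Fin n) ℝ E)
  (W : Submodule ℝ E) (v : Fin n → E)

theorem det_sq_mul_pow_mul_pow_le {s t : ℝ} (hs : 0 ≤ s) (ht : 0 ≤ t) :
    b.toBasis.det v ^ 2 * (s ^ finrank ℝ W * t ^ finrank ℝ Wᗮ) ≤
      ((s * ∑ i, ‖W.starProjection (v i)‖ ^ 2 + t * ∑ i, ‖Wᗮ.starProjection (v i)‖ ^ 2) / n)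
        ^ n := by
  set T := W.orthogonalScaling √s √t
  have hdetT : LinearMap.det (T : E →ₗ[ℝ] E) ^ 2 = s ^ finrank ℝ W * t ^ finrank ℝ Wᗮ := by
    rw [W.det_orthogonalScaling, mul_pow, ← pow_mul, ← pow_mul, mul_comm _ 2, mul_comm _ 2,
      pow_mul, pow_mul, Real.sq_sqrt hs, Real.sq_sqrt ht]
  have hsum : ∑ i, ‖T (v i)‖ ^ 2 =
      s * ∑ i, ‖W.starProjection (v i)‖ ^ 2 + t * ∑ i, ‖Wᗮ.starProjection (v i)‖ ^ 2 := by
    simp only [T, W.norm_orthogonalScaling_sq, Real.sq_sqrt hs, Real.sq_sqrt ht,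
      Finset.sum_add_distrib, Finset.mul_sum]
  calc b.toBasis.det v ^ 2 * (s ^ finrank ℝ W * t ^ finrank ℝ Wᗮ)
      = |b.toBasis.det (T ∘ v)| ^ 2 := by
        rw [sq_abs, ← hdetT, ← mul_pow, mul_comm]
        exact congrArg (· ^ 2) (b.toBasis.det_comp (T : E →ₗ[ℝ] E) v).symm
    _ ≤ ∏ i, ‖T (v i)‖ ^ 2 := by
        rw [Finset.prod_pow]
        exact pow_le_pow_left₀ (abs_nonneg _) (b.abs_det_le_prod_norm _) 2
    _ ≤ ((∑ i, ‖T (v i)‖ ^ 2) / n) ^ n := by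
        simpa using Real.prod_le_arith_mean_pow univ (fun i ↦ ‖T (v i)‖ ^ 2)
          (fun _ _ ↦ by positivity)
    _ = _ := by rw [hsum]

theorem det_eq_zero_of_sum_norm_starProjection_sq_eq_zero (hW : 0 < finrank ℝ W)
    (h : ∑ i, ‖W.starProjection (v i)‖ ^ 2 = 0) : b.toBasis.det v = 0 := by
  have hv : ∀ i, v i ∈ Wᗮ := fun i ↦ (W.starProjection_apply_eq_zero_iff).mp <| by
    simpa using (Finset.sum_eq_zero_iff_of_nonneg fun i _ ↦ by positivity).mp h i (mem_univ i)
  refine b.toBasis.det_eq_zero_of_forall_mem hv ?_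
  have := W.finrank_add_finrank_orthogonal
  rw [finrank_eq_card_basis b.toBasis] at this
  omega

theorem det_sq_le_mean_pow_mul_mean_pow (hW : 0 < finrank ℝ W) (hW' : 0 < finrank ℝ Wᗮ) :
    b.toBasis.det v ^ 2 ≤
      ((∑ i, ‖W.starProjection (v i)‖ ^ 2) / finrank ℝ W) ^ finrank ℝ W *
        ((∑ i, ‖Wᗮ.starProjection (v i)‖ ^ 2) / finrank ℝ Wᗮ) ^ finrank ℝ Wᗮ := by
  set p := finrank ℝ W
  set q := finrank ℝ Wᗮ
  rcases (show 0 ≤ ∑ i, ‖W.starProjection (v i)‖ ^ 2 by positivity).eq_or_lt with hX | hX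
  · rw [b.det_eq_zero_of_sum_norm_starProjection_sq_eq_zero W v hW hX.symm,
      zero_pow two_ne_zero]
    positivity
  rcases (show 0 ≤ ∑ i, ‖Wᗮ.starProjection (v i)‖ ^ 2 by positivity).eq_or_lt with hY | hY
  · rw [b.det_eq_zero_of_sum_norm_starProjection_sq_eq_zero Wᗮ v hW' hY.symm,
      zero_pow two_ne_zero]
    positivity
  have hpq : (p : ℝ) + q = n := by
    have := W.finrank_add_finrank_orthogonal
    rw [finrank_eq_card_basis b.toBasis, Fintype.card_fin] at this
    exact_mod_cast this
  have hn : (n : ℝ) ≠ 0 := by rw [← hpq]; positivity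
  have key := b.det_sq_mul_pow_mul_pow_le W v (s := p / _) (t := q / _) (div_nonneg
    (Nat.cast_nonneg p) hX.le) (div_nonneg (Nat.cast_nonneg q) hY.le)
  rw [div_mul_cancel₀ _ hX.ne', div_mul_cancel₀ _ hY.ne', hpq, div_self hn,
    one_pow, ← le_div_iff₀ (by positivity), one_div, mul_inv, ← inv_pow, ← inv_pow, inv_div,
    inv_div] at key
  exact key

end OrthonormalBasis

end InnerProductSpace

theorem stmt_0 (K m : ℕ) (hm : 1 ≤ m) (hmK : m < K)
    (G : Matrix (Fin K) (Fin K) ℝ)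
    (hlower : ∀ i j : Fin K, i < j → G i j = 0)
    (g : Fin K → EuclideanSpace ℝ (Fin K))
    (hg : ∀ i j : Fin K, g i j = G i j)
    (W : Submodule ℝ (EuclideanSpace ℝ (Fin K)))
    (hW : Module.finrank ℝ W = m) :
    ∏ i : Fin K, (G i i) ^ 2 ≤
      ((1 / (m : ℝ)) * ∑ i : Fin K,
          ‖(Submodule.orthogonalProjectionOnto W (g i) : EuclideanSpace ℝ (Fin K))‖ ^ 2) ^ m *
      ((1 / ((K : ℝ) - (m : ℝ))) * ∑ i : Fin K,
          ‖g i - (Submodule.orthogonalProjectionOnto W (g i) : EuclideanSpace ℝ (Fin K))‖ ^ 2) ^ (K - m) := by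
  have hW' : finrank ℝ Wᗮ = K - m := by
    have := W.finrank_add_finrank_orthogonal
    rw [hW, finrank_euclideanSpace_fin] at this
    omega
  have hdet : (EuclideanSpace.basisFun (Fin K) ℝ).toBasis.det g = ∏ i, G i i := by
    rw [EuclideanSpace.basisFun_toBasis_det, ← Matrix.det_of_isLowerTriangular G hlower]
    congr 1
    ext i j
    exact hg i j
  have := (EuclideanSpace.basisFun (Fin K) ℝ).det_sq_le_mean_pow_mul_mean_pow W g
    (by omega) (by omega)
  rw [hdet, ← prod_pow, hW, hW'] at this
  convert this using 3 <;> simp [Nat.cast_sub hmK.le, div_eq_inv_mul]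
end

section
/- Let (τ_n)_{n≥1} be a nonincreasing sequence of reals in [0,1], (d_n)_{n≥1} nonnegative reals, and (γ_n)_{n≥1} ⊆ (0,1], satisfying for all N ≥ 0, K ≥ 2, 1 ≤ m < K the inequality ∏_{i=1}^K τ_{N+i}² ≤ (∏_{i=1}^K γ_{N+i})^{-2} · 2^K K^{K−m} (∑_{i=1}^K τ_{N+i}²)^m d_m^{2(K−m)}. Then for every ℓ ≥ 1: τ_{2ℓ} ≤ 2 (∏_{i=1}^{2ℓ} γ_i^{1/(2ℓ)})^{-1} √(ℓ d_ℓ). -/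
/-!
Apply the master inequality with `N = 0`, `K = 2ℓ`, `m = ℓ`. Monotonicity bounds the left side below
by `τ_{2ℓ} ^ (4ℓ)`, and `τ_i ≤ 1` bounds the sum on the right by `2ℓ`, so
`τ_{2ℓ} ^ (4ℓ) ≤ (∏ γ_i)⁻² (4ℓ d_ℓ) ^ (2ℓ)`; taking `4ℓ`-th roots gives the claim.
-/

open Finset

lemma pow_two_mul_le_prod_Icc_sq {τ : ℕ → ℝ} (hτ0 : ∀ n, 0 ≤ τ n) (hτ : Antitone τ) (n : ℕ) :
    τ n ^ (2 * n) ≤ ∏ i ∈ Icc 1 n, τ i ^ 2 := by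
  calc τ n ^ (2 * n) = ∏ _i ∈ Icc 1 n, τ n ^ 2 := by
        rw [prod_const, Nat.card_Icc, Nat.add_sub_cancel, ← pow_mul]
    _ ≤ ∏ i ∈ Icc 1 n, τ i ^ 2 :=
        prod_le_prod (fun _ _ => by positivity)
          fun i hi => pow_le_pow_left₀ (hτ0 n) (hτ (mem_Icc.mp hi).2) 2

lemma sum_sq_le_card {ι : Type*} (s : Finset ι) {τ : ι → ℝ}
    (hτ0 : ∀ i ∈ s, 0 ≤ τ i) (hτ1 : ∀ i ∈ s, τ i ≤ 1) :
    ∑ i ∈ s, τ i ^ 2 ≤ #s := by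
  simpa using sum_le_sum fun i hi => pow_le_one₀ (n := 2) (hτ0 i hi) (hτ1 i hi)

lemma le_inv_rpow_mul_of_pow_le {x P b : ℝ} {n : ℕ} (hx : 0 ≤ x) (hP : 0 < P) (hb : 0 ≤ b)
    (hn : n ≠ 0) (h : x ^ (2 * n) ≤ (P⁻¹) ^ 2 * (b ^ 2) ^ n) :
    x ≤ (P ^ ((1 : ℝ) / n))⁻¹ * b := by
  have hroot : (P ^ ((1 : ℝ) / n)) ^ (2 * n) = P ^ 2 := by
    rw [← Real.rpow_natCast, ← Real.rpow_mul hP.le, one_div, Nat.cast_mul, Nat.cast_ofNat,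
      mul_left_comm, inv_mul_cancel₀ (by exact_mod_cast hn), mul_one, Real.rpow_two]
  have hrhs : ((P ^ ((1 : ℝ) / n))⁻¹ * b) ^ (2 * n) = (P⁻¹) ^ 2 * (b ^ 2) ^ n := by
    rw [mul_pow, inv_pow, hroot, ← inv_pow, pow_mul]
  rw [← hrhs] at h
  exact (pow_le_pow_iff_left₀ hx (by positivity) (by omega)).mp h

lemma pow_le_of_prod_sq_le_master {τ : ℕ → ℝ} {C D : ℝ} (hτ0 : ∀ n, 0 ≤ τ n)
    (hτ1 : ∀ n, τ n ≤ 1) (hτ : Antitone τ) (hC : 0 ≤ C) (hD : 0 ≤ D) (ℓ : ℕ)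
    (h : ∏ i ∈ Icc 1 (2 * ℓ), τ i ^ 2 ≤
      C * 2 ^ (2 * ℓ) * ((2 * ℓ : ℕ) : ℝ) ^ ℓ * (∑ i ∈ Icc 1 (2 * ℓ), τ i ^ 2) ^ ℓ * D ^ (2 * ℓ)) :
    τ (2 * ℓ) ^ (2 * (2 * ℓ)) ≤ C * (4 * ℓ * D) ^ (2 * ℓ) := by
  have hsum := sum_sq_le_card (Icc 1 (2 * ℓ)) (fun i _ => hτ0 i) (fun i _ => hτ1 i)
  rw [Nat.card_Icc, Nat.add_sub_cancel] at hsum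
  calc τ (2 * ℓ) ^ (2 * (2 * ℓ)) ≤ ∏ i ∈ Icc 1 (2 * ℓ), τ i ^ 2 :=
        pow_two_mul_le_prod_Icc_sq hτ0 hτ _
    _ ≤ C * 2 ^ (2 * ℓ) * ((2 * ℓ : ℕ) : ℝ) ^ ℓ * ((2 * ℓ : ℕ) : ℝ) ^ ℓ * D ^ (2 * ℓ) := by
        refine h.trans ?_
        gcongr
    _ = C * (4 * ℓ * D) ^ (2 * ℓ) := by
        push_cast
        rw [show 4 * (ℓ : ℝ) * D = 2 ^ 2 * (ℓ * D) by ring, mul_pow (2 ^ 2), ← pow_mul]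
        ring

theorem stmt_5 (τ d γ : ℕ → ℝ)
    (hτ0 : ∀ n, 0 ≤ τ n) (hτ1 : ∀ n, τ n ≤ 1)
    (hmono : ∀ m n : ℕ, m ≤ n → τ n ≤ τ m)
    (hd : ∀ n, 0 ≤ d n)
    (hγ : ∀ n, 0 < γ n ∧ γ n ≤ 1)
    (hmaster : ∀ N K m : ℕ, 2 ≤ K → 1 ≤ m → m < K →
      ∏ i ∈ Finset.Icc 1 K, (τ (N + i)) ^ 2 ≤
        ((∏ i ∈ Finset.Icc 1 K, γ (N + i))⁻¹) ^ 2 * 2 ^ K * (K : ℝ) ^ (K - m) *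
          (∑ i ∈ Finset.Icc 1 K, (τ (N + i)) ^ 2) ^ m * (d m) ^ (2 * (K - m))) :
    ∀ ℓ : ℕ, 1 ≤ ℓ →
      τ (2 * ℓ) ≤ 2 * (∏ i ∈ Finset.Icc 1 (2 * ℓ), (γ i) ^ ((1 : ℝ) / (2 * ℓ)))⁻¹ *
        Real.sqrt ((ℓ : ℝ) * d ℓ) := by
  intro ℓ hℓ
  set P := ∏ i ∈ Icc 1 (2 * ℓ), γ i
  have hP : 0 < P := prod_pos fun i _ => (hγ i).1
  have hmaster_ℓ := hmaster 0 (2 * ℓ) ℓ (by omega) hℓ (by omega)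
  simp only [zero_add, show 2 * ℓ - ℓ = ℓ by omega] at hmaster_ℓ
  have key := pow_le_of_prod_sq_le_master hτ0 hτ1 (fun m n h => hmono m n h)
    (C := (P⁻¹) ^ 2) (by positivity) (hd ℓ) ℓ hmaster_ℓ
  have hsqrt : (2 * Real.sqrt (ℓ * d ℓ)) ^ 2 = 4 * ℓ * d ℓ := by
    rw [mul_pow, Real.sq_sqrt (mul_nonneg (Nat.cast_nonneg ℓ) (hd ℓ))]
    ring
  rw [← hsqrt] at key
  rw [Real.finsetProd_rpow _ _ fun i _ => (hγ i).1.le]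
  convert le_inv_rpow_mul_of_pow_le (hτ0 _) hP (by positivity) (by omega) key using 1
  push_cast
  ring
end

section
/- Let X be a Banach space, F ⊆ X compact, and let φ₀ ∈ F satisfy ‖φ₀‖ ≥ η max_{φ ∈ F} ‖φ‖ for some 0 < η ≤ 1. Let X₁ = span{φ₀} and for φ ∈ X let P₁(φ) denote a best approximation of φ from X₁. Then max_{φ ∈ F} ‖φ − P₁(φ)‖ ≤ 2(1 + η^{-1}) · d₁(F, X), where d₁(F, X) = inf over one-dimensional subspaces Y of max_{φ ∈ F} dist(φ, Y). -/
/-!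
Let `Y = span {v}` be a line within `t` of every element of `F`, and pick `a₀ • v` and `a • v`
within `t` of `φ₀` and `φ`. Then `(a / a₀) • φ₀ ∈ X₁` is within `(1 + ‖a / a₀‖) t` of `φ`, and
`‖a / a₀‖ ≤ (‖φ‖ + t) / (‖φ₀‖ - t)` because `a₀ • v` is almost as long as `φ₀`. When
`‖φ₀‖ > 2t` this ratio is at most `1 + 2η⁻¹`; otherwise `φ` itself is short, at most
`η⁻¹ ‖φ₀‖ ≤ 2η⁻¹ t`, and `0 ∈ X₁` is good enough.
-/

open Metric Submodule

theorem Submodule.exists_eq_span_singleton_of_finrank_eq_one {K V : Type*} [Field K]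
    [AddCommGroup V] [Module K V] {Y : Submodule K V} (hY : Module.finrank K Y = 1) :
    ∃ v : V, Y = span K {v} := by
  obtain ⟨v, -, hv⟩ := finrank_eq_one_iff'.1 hY
  refine ⟨v, le_antisymm (fun y hy => ?_) (span_le.2 (Set.singleton_subset_iff.2 v.2))⟩
  obtain ⟨c, hc⟩ := hv ⟨y, hy⟩
  exact mem_span_singleton.2 ⟨c, congrArg Subtype.val hc⟩

theorem IsCompact.infDist_le_iSup_infDist {α : Type*} [PseudoMetricSpace α] {F : Set α}
    (hF : IsCompact F) (s : Set α) {x : α} (hx : x ∈ F) :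
    infDist x s ≤ ⨆ y : F, infDist (y : α) s := by
  have := isCompact_iff_compactSpace.1 hF
  exact le_ciSup (isCompact_range ((continuous_infDist_pt s).comp continuous_subtype_val)).bddAbove
    (⟨x, hx⟩ : F)

section SpanSingleton

variable {𝕜 E : Type*} [NormedField 𝕜] [NormedAddCommGroup E] [NormedSpace 𝕜 E]

theorem exists_norm_sub_smul_lt_of_infDist_span_singleton_lt {x v : E} {t : ℝ}
    (h : infDist x (span 𝕜 {v}) < t) : ∃ a : 𝕜, ‖x - a • v‖ < t := by
  obtain ⟨z, hz, hxz⟩ := (infDist_lt_iff ⟨0, zero_mem _⟩).1 h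
  obtain ⟨a, rfl⟩ := mem_span_singleton.1 hz
  exact ⟨a, by rwa [← dist_eq_norm]⟩

theorem infDist_span_singleton_le_of_norm_sub_smul_le {φ₀ φ v : E} {a₀ a : 𝕜} {t : ℝ}
    (h₀ : ‖φ₀ - a₀ • v‖ ≤ t) (h : ‖φ - a • v‖ ≤ t) (ht : t < ‖φ₀‖) :
    infDist φ (span 𝕜 {φ₀}) ≤ t + (‖φ‖ + t) / (‖φ₀‖ - t) * t := by
  have ht₀ : 0 ≤ t := (norm_nonneg _).trans h₀
  have hlong : ‖φ₀‖ - t ≤ ‖a₀ • v‖ := by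
    linarith [norm_sub_norm_le φ₀ (a₀ • v)]
  have ha₀ : a₀ ≠ 0 := by
    rintro rfl
    rw [zero_smul, norm_zero] at hlong
    linarith
  set c := a / a₀
  have hc : c • a₀ • v = a • v := by rw [smul_smul, div_mul_cancel₀ a ha₀]
  have hc_le : ‖c‖ ≤ (‖φ‖ + t) / (‖φ₀‖ - t) := by
    rw [le_div_iff₀ (by linarith)]
    calc ‖c‖ * (‖φ₀‖ - t) ≤ ‖c‖ * ‖a₀ • v‖ := by gcongr
      _ = ‖a • v‖ := by rw [← norm_smul, hc]
      _ ≤ ‖φ‖ + t := by linarith [norm_sub_norm_le (a • v) φ, norm_sub_rev φ (a • v)]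
  calc infDist φ (span 𝕜 {φ₀}) ≤ ‖φ - c • φ₀‖ := by
        rw [← dist_eq_norm]
        exact infDist_le_dist_of_mem (smul_mem _ c (mem_span_singleton_self φ₀))
    _ = ‖(φ - a • v) + c • (a₀ • v - φ₀)‖ := by
        rw [smul_sub, hc]
        congr 1
        abel
    _ ≤ ‖φ - a • v‖ + ‖c‖ * ‖φ₀ - a₀ • v‖ := by
        rw [norm_sub_rev φ₀, ← norm_smul]
        exact norm_add_le _ _
    _ ≤ t + (‖φ‖ + t) / (‖φ₀‖ - t) * t := by gcongr

theorem infDist_span_singleton_le_of_infDist_lt {φ₀ φ v : E} {η t : ℝ} (hη : 0 < η)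
    (hφ : η * ‖φ‖ ≤ ‖φ₀‖) (h₀ : infDist φ₀ (span 𝕜 {v}) < t) (h : infDist φ (span 𝕜 {v}) < t) :
    infDist φ (span 𝕜 {φ₀}) ≤ 2 * (1 + η⁻¹) * t := by
  have ht : 0 < t := infDist_nonneg.trans_lt h
  have hφ_le : ‖φ‖ ≤ η⁻¹ * ‖φ₀‖ := by rwa [inv_mul_eq_div, le_div_iff₀' hη]
  rcases le_or_gt ‖φ₀‖ (2 * t) with hshort | hlong
  · have hzero : infDist φ (span 𝕜 {φ₀}) ≤ ‖φ‖ := by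
      simpa using infDist_le_dist_of_mem (zero_mem (span 𝕜 {φ₀}))
    have : η⁻¹ * ‖φ₀‖ ≤ η⁻¹ * (2 * t) := by gcongr
    nlinarith
  · obtain ⟨a₀, ha₀⟩ := exists_norm_sub_smul_lt_of_infDist_span_singleton_lt h₀
    obtain ⟨a, ha⟩ := exists_norm_sub_smul_lt_of_infDist_span_singleton_lt h
    refine (infDist_span_singleton_le_of_norm_sub_smul_le ha₀.le ha.le (by linarith)).trans ?_
    have hratio : (‖φ‖ + t) / (‖φ₀‖ - t) ≤ 1 + 2 * η⁻¹ := by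
      rw [div_le_iff₀ (by linarith)]
      nlinarith [inv_pos.2 hη]
    nlinarith

theorem infDist_span_singleton_le_of_infDist_le {φ₀ φ v : E} {η e : ℝ} (hη : 0 < η)
    (hφ : η * ‖φ‖ ≤ ‖φ₀‖) (h₀ : infDist φ₀ (span 𝕜 {v}) ≤ e) (h : infDist φ (span 𝕜 {v}) ≤ e) :
    infDist φ (span 𝕜 {φ₀}) ≤ 2 * (1 + η⁻¹) * e := by
  have hC : 0 < 2 * (1 + η⁻¹) := by positivity
  rw [← div_le_iff₀' hC]
  refine le_of_forall_gt_imp_ge_of_dense fun t ht => ?_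
  rw [div_le_iff₀' hC]
  exact infDist_span_singleton_le_of_infDist_lt hη hφ (h₀.trans_lt ht) (h.trans_lt ht)

end SpanSingleton

theorem stmt_9_general {X : Type*} [NormedAddCommGroup X] [NormedSpace ℝ X]
    (F : Set X) (hFc : IsCompact F)
    (η : ℝ) (hη0 : 0 < η)
    (φ₀ : X) (hφ₀F : φ₀ ∈ F)
    (hφ₀ : ∀ φ ∈ F, η * ‖φ‖ ≤ ‖φ₀‖)
    (P₁ : X → X)
    (hP₁best : ∀ φ : X, ‖φ - P₁ φ‖ =
      Metric.infDist φ (Submodule.span ℝ {φ₀} : Submodule ℝ X)) :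
    ∀ φ ∈ F, ‖φ - P₁ φ‖ ≤ 2 * (1 + η⁻¹) *
      ⨅ Y : {Y : Submodule ℝ X // Module.finrank ℝ Y = 1},
        ⨆ ψ : F, Metric.infDist (ψ : X) (Y.1 : Set X) := by
  intro φ hφ
  rw [hP₁best]
  rcases subsingleton_or_nontrivial X with hX | hX
  · rw [Subsingleton.elim φ 0, infDist_zero_of_mem (zero_mem _)]
    exact mul_nonneg (by positivity)
      (Real.iInf_nonneg fun _ => Real.iSup_nonneg fun _ => infDist_nonneg)
  · obtain ⟨v, hv⟩ := exists_ne (0 : X)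
    have : Nonempty {Y : Submodule ℝ X // Module.finrank ℝ Y = 1} :=
      ⟨⟨span ℝ {v}, finrank_span_singleton hv⟩⟩
    rw [Real.mul_iInf_of_nonneg (by positivity)]
    refine le_ciInf fun ⟨Y, hY⟩ => ?_
    obtain ⟨w, rfl⟩ := Submodule.exists_eq_span_singleton_of_finrank_eq_one hY
    exact infDist_span_singleton_le_of_infDist_le hη0 (hφ₀ φ hφ)
      (hFc.infDist_le_iSup_infDist _ hφ₀F) (hFc.infDist_le_iSup_infDist _ hφ)

theorem stmt_9 {X : Type*} [NormedAddCommGroup X] [NormedSpace ℝ X] [CompleteSpace X]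
    (F : Set X) (hFc : IsCompact F) (hFne : F.Nonempty)
    (hFbd : ∀ φ ∈ F, ‖φ‖ ≤ 1)
    (η : ℝ) (hη0 : 0 < η) (hη1 : η ≤ 1)
    (φ₀ : X) (hφ₀F : φ₀ ∈ F)
    (hφ₀ : ∀ φ ∈ F, η * ‖φ‖ ≤ ‖φ₀‖)
    (P₁ : X → X)
    (hP₁mem : ∀ φ : X, P₁ φ ∈ Submodule.span ℝ {φ₀})
    (hP₁best : ∀ φ : X, ‖φ - P₁ φ‖ =
      Metric.infDist φ (Submodule.span ℝ {φ₀} : Submodule ℝ X)) :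
    ∀ φ ∈ F, ‖φ - P₁ φ‖ ≤ 2 * (1 + η⁻¹) *
      ⨅ Y : {Y : Submodule ℝ X // Module.finrank ℝ Y = 1},
        ⨆ ψ : F, Metric.infDist (ψ : X) (Y.1 : Set X) :=
  stmt_9_general F hFc η hη0 φ₀ hφ₀F hφ₀ P₁ hP₁best
end

section
/- Let A = (a_{i,j})_{i,j ≥ 0} be an infinite lower triangular real matrix and (τ_n), (γ_n), (d_m) nonnegative sequences satisfying: (Q1) γ_n τ_n ≤ |a_{n,n}| ≤ τ_n for all n; (Q2) |a_{i,j}| ≤ τ_j for all j < i. Suppose moreover that for a fixed K ≥ 2, N ≥ 0, and 1 ≤ m < K there is an m-dimensional subspace W ⊆ ℝ^K with orthogonal projection P such that each row g_i = (a_{N+i, N+1},…,a_{N+i, N+K}), i = 1,…,K, of the K×K block satisfies ‖g_i − P g_i‖ ≤ √K · d_m. Then ∏_{i=1}^K γ_{N+i}² τ_{N+i}² ≤ 2^K K^{K−m} (∑_{i=1}^K τ_{N+i}²)^m d_m^{2(K−m)}. -/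
/-! Since the block is lower triangular, `∏ γ²τ²` is at most the squared determinant of the rows
`g i`. Compute that determinant in an orthonormal basis adapted to `W ⊕ Wᗮ` and apply Hadamard's
inequality to its columns: the `m` columns along `W` carry total squared mass `∑ ‖P g i‖² ≤ K ∑ τ²`,
the `K - m` columns along `Wᗮ` carry `∑ ‖g i - P g i‖² ≤ K² d²`. AM-GM inside each group and
`(K / m) ^ m (K / (K - m)) ^ (K - m) ≤ 2 ^ K` give the bound. -/

open Finset Matrix Module
open scoped RealInnerProductSpace

@[to_additive]
theorem Finset.prod_Icc_eq_prod_fin_succ {M : Type*} [CommMonoid M] (n : ℕ) (f : ℕ → M) :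
    ∏ i ∈ Icc 1 n, f i = ∏ i : Fin n, f (i + 1) := by
  rw [Fin.prod_univ_eq_prod_range (fun i ↦ f (i + 1)), range_eq_Ico, prod_Ico_add' f]
  rfl

theorem Real.prod_le_sum_div_card_pow {ι : Type*} (s : Finset ι) (x : ι → ℝ)
    (hx : ∀ i ∈ s, 0 ≤ x i) : ∏ i ∈ s, x i ≤ ((∑ i ∈ s, x i) / #s) ^ #s := by
  rcases s.eq_empty_or_nonempty with rfl | hs
  · simp
  have hn : (#s : ℝ) ≠ 0 := by exact_mod_cast hs.card_pos.ne'
  have amgm := Real.geom_mean_le_arith_mean_weighted s (fun _ ↦ (#s : ℝ)⁻¹) x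
    (fun _ _ ↦ by positivity) (by simp [hn]) hx
  rw [Real.finsetProd_rpow s x hx, ← mul_sum, inv_mul_eq_div] at amgm
  calc ∏ i ∈ s, x i = ((∏ i ∈ s, x i) ^ (#s : ℝ)⁻¹) ^ #s :=
        (Real.rpow_inv_natCast_pow (prod_nonneg hx) hs.card_pos.ne').symm
    _ ≤ _ := pow_le_pow_left₀ (Real.rpow_nonneg (prod_nonneg hx) _) amgm _

/-- AM-GM for `m` copies of `n / m` and `k` copies of `n / k`, where `n = m + k`; equivalently
`x ^ (-x) (1 - x) ^ (x - 1) ≤ 2` for `x = m / n`. -/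
theorem Real.add_div_pow_mul_add_div_pow_le (m k : ℕ) :
    (((m + k : ℕ) : ℝ) / m) ^ m * (((m + k : ℕ) : ℝ) / k) ^ k ≤ 2 ^ (m + k) := by
  set n : ℝ := ((m + k : ℕ) : ℝ)
  have amgm := Real.prod_le_sum_div_card_pow (univ : Finset (Fin m ⊕ Fin k))
    (Sum.elim (fun _ ↦ n / m) (fun _ ↦ n / k))
    (by rintro (i | i) _ <;> simp only [Sum.elim_inl, Sum.elim_inr] <;> positivity)
  simp only [Fintype.prod_sum_type, Fintype.sum_sum_type, Sum.elim_inl, Sum.elim_inr,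
    prod_const, sum_const, card_univ, Fintype.card_sum, Fintype.card_fin, nsmul_eq_mul] at amgm
  refine amgm.trans (pow_le_pow_left₀ (by positivity) ?_ _)
  have mul_div_le (a : ℝ) : a * (n / a) ≤ n := by
    rcases eq_or_ne a 0 with rfl | ha
    · simp only [zero_mul]; positivity
    · rw [mul_div_cancel₀ _ ha]
  rcases (m + k).eq_zero_or_pos with h | h
  · simp [n, h]
  rw [div_le_iff₀ (by positivity)]
  linarith [mul_div_le m, mul_div_le k]

theorem Matrix.det_sq_le_prod_sum_sq_fin {n : ℕ} (M : Matrix (Fin n) (Fin n) ℝ) :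
    M.det ^ 2 ≤ ∏ i, ∑ j, M i j ^ 2 := by
  have : Fact (finrank ℝ (EuclideanSpace ℝ (Fin n)) = n) := ⟨finrank_euclideanSpace_fin⟩
  let rows : Fin n → EuclideanSpace ℝ (Fin n) := fun i ↦ WithLp.toLp 2 (M i)
  let e := EuclideanSpace.basisFun (Fin n) ℝ
  have hadamard := e.toBasis.orientation.abs_volumeForm_apply_le rows
  rw [Orientation.volumeForm_robust' _ e, Basis.det_apply] at hadamard
  have : e.toBasis.toMatrix rows = Mᵀ := by ext; rfl
  rw [this, det_transpose] at hadamard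
  calc M.det ^ 2 = |M.det| ^ 2 := (sq_abs _).symm
    _ ≤ (∏ i, ‖rows i‖) ^ 2 := by gcongr
    _ = ∏ i, ∑ j, M i j ^ 2 := by simp [rows, ← prod_pow, EuclideanSpace.norm_sq_eq]

theorem Matrix.det_sq_le_prod_sum_sq {ι : Type*} [Fintype ι] [DecidableEq ι]
    (M : Matrix ι ι ℝ) : M.det ^ 2 ≤ ∏ i, ∑ j, M i j ^ 2 := by
  let e := Fintype.equivFin ι
  have := (M.reindex e e).det_sq_le_prod_sum_sq_fin
  rw [det_reindex_self] at this
  convert this using 1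
  rw [← e.symm.prod_comp]
  refine prod_congr rfl fun i _ ↦ ?_
  rw [← e.symm.sum_comp]
  rfl

theorem EuclideanSpace.basisFun_det_of_lowerTriangular {𝕜 ι : Type*} [RCLike 𝕜] [Fintype ι]
    [LinearOrder ι] (v : ι → EuclideanSpace 𝕜 ι) (hv : ∀ i j, i < j → v i j = 0) :
    (EuclideanSpace.basisFun ι 𝕜).toBasis.det v = ∏ i, v i i :=
  det_of_isUpperTriangular fun i j hij ↦ hv j i hij

theorem EuclideanSpace.sq_prod_le_basisFun_det_sq {ι : Type*} [Fintype ι] [LinearOrder ι]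
    (v : ι → EuclideanSpace ℝ ι) (hv : ∀ i j, i < j → v i j = 0) {c : ι → ℝ}
    (hc0 : ∀ i, 0 ≤ c i) (hc : ∀ i, c i ≤ |v i i|) :
    ∏ i, c i ^ 2 ≤ ((EuclideanSpace.basisFun ι ℝ).toBasis.det v) ^ 2 := by
  rw [basisFun_det_of_lowerTriangular v hv, ← prod_pow]
  refine prod_le_prod (fun i _ ↦ sq_nonneg _) fun i _ ↦ ?_
  rw [← sq_abs (v i i)]
  exact pow_le_pow_left₀ (hc0 i) (hc i) 2

theorem EuclideanSpace.norm_sq_le_sum_sq {ι : Type*} [Fintype ι] (v : EuclideanSpace ℝ ι)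
    {t : ι → ℝ} (hv : ∀ j, |v j| ≤ t j) : ‖v‖ ^ 2 ≤ ∑ j, t j ^ 2 := by
  rw [EuclideanSpace.norm_sq_eq]
  gcongr with j
  exact hv j

section InnerProductSpace

variable {ι κ E : Type*} [Fintype ι] [Fintype κ] [NormedAddCommGroup E] [InnerProductSpace ℝ E]

theorem OrthonormalBasis.det_sq_le_prod_sum_inner_sq [DecidableEq ι]
    (b : OrthonormalBasis ι ℝ E) (c : OrthonormalBasis κ ℝ E) (v : ι → E) :
    (b.toBasis.det v) ^ 2 ≤ ∏ k, ∑ i, ⟪c k, v i⟫ ^ 2 := by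
  have : FiniteDimensional ℝ E := b.toBasis.finiteDimensional_of_finite
  let e : κ ≃ ι := Fintype.equivOfCardEq <| by
    rw [← finrank_eq_card_basis c.toBasis, finrank_eq_card_basis b.toBasis]
  let c' := c.reindex e
  have hbc : (b.toBasis.det c') ^ 2 = 1 := by
    rcases b.det_to_matrix_orthonormalBasis_real c' with h | h <;> simp [h]
  calc (b.toBasis.det v) ^ 2 = (c'.toBasis.toMatrix v).det ^ 2 := by
        rw [Basis.det_apply, ← b.toBasis.toMatrix_mul_toMatrix c'.toBasis, det_mul, mul_pow,
          ← Basis.det_apply, OrthonormalBasis.coe_toBasis, hbc, one_mul]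
    _ ≤ ∏ i, ∑ j, ⟪c' i, v j⟫ ^ 2 := by
        simpa only [Basis.toMatrix_apply, OrthonormalBasis.coe_toBasis_repr_apply,
          c'.repr_apply_apply] using det_sq_le_prod_sum_sq (c'.toBasis.toMatrix v)
    _ = ∏ k, ∑ i, ⟪c k, v i⟫ ^ 2 := by
        rw [← e.prod_comp]
        simp only [c', OrthonormalBasis.reindex_apply, Equiv.symm_apply_apply]

theorem Submodule.prod_sum_inner_sq_le (W : Submodule ℝ E) [W.HasOrthogonalProjection]
    (b : OrthonormalBasis κ ℝ W) (v : ι → E) :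
    ∏ k, ∑ i, ⟪(b k : E), v i⟫ ^ 2 ≤
      ((∑ i, ‖W.orthogonalProjectionOnto (v i)‖ ^ 2) / Fintype.card κ) ^ Fintype.card κ := by
  simp_rw [← W.inner_orthogonalProjectionOnto_eq_of_mem_left, ← b.sum_sq_inner_right]
  rw [sum_comm]
  exact Real.prod_le_sum_div_card_pow univ _ (fun _ _ ↦ sum_nonneg fun _ _ ↦ sq_nonneg _)

theorem Submodule.det_sq_le [DecidableEq ι] [FiniteDimensional ℝ E] (W : Submodule ℝ E)
    (b : OrthonormalBasis ι ℝ E) (v : ι → E) :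
    (b.toBasis.det v) ^ 2 ≤
      ((∑ i, ‖W.orthogonalProjectionOnto (v i)‖ ^ 2) / finrank ℝ W) ^ finrank ℝ W *
      ((∑ i, ‖Wᗮ.orthogonalProjectionOnto (v i)‖ ^ 2) / finrank ℝ Wᗮ) ^ finrank ℝ Wᗮ := by
  let b₁ := stdOrthonormalBasis ℝ W
  let b₂ := stdOrthonormalBasis ℝ Wᗮ
  let c := (b₁.prod b₂).map W.orthogonalDecomposition.symm
  calc (b.toBasis.det v) ^ 2 ≤ ∏ k, ∑ i, ⟪c k, v i⟫ ^ 2 := b.det_sq_le_prod_sum_inner_sq c v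
    _ = (∏ k, ∑ i, ⟪(b₁ k : E), v i⟫ ^ 2) * ∏ k, ∑ i, ⟪(b₂ k : E), v i⟫ ^ 2 := by
      simp [c, Fintype.prod_sum_type]
    _ ≤ _ := by
      refine mul_le_mul ?_ ?_ (prod_nonneg fun _ _ ↦ sum_nonneg fun _ _ ↦ sq_nonneg _)
        (by positivity)
      · simpa only [Fintype.card_fin] using W.prod_sum_inner_sq_le b₁ v
      · simpa only [Fintype.card_fin] using Wᗮ.prod_sum_inner_sq_le b₂ v

theorem Submodule.det_sq_le_of_norm_le [DecidableEq ι] [FiniteDimensional ℝ E]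
    (W : Submodule ℝ E) (b : OrthonormalBasis ι ℝ E) (v : ι → E) {S D : ℝ}
    (hS : ∀ i, ‖v i‖ ^ 2 ≤ S) (hD : ∀ i, ‖v i - W.orthogonalProjectionOnto (v i)‖ ^ 2 ≤ D) :
    (b.toBasis.det v) ^ 2 ≤
      (Fintype.card ι * S / finrank ℝ W) ^ finrank ℝ W *
      (Fintype.card ι * D / finrank ℝ Wᗮ) ^ finrank ℝ Wᗮ := by
  refine (W.det_sq_le b v).trans ?_
  have hsum {x : ι → ℝ} {C : ℝ} (hx : ∀ i, x i ≤ C) : ∑ i, x i ≤ Fintype.card ι * C := by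
    simpa using sum_le_sum fun i (_ : i ∈ univ) ↦ hx i
  have hW : ∑ i, ‖W.orthogonalProjectionOnto (v i)‖ ^ 2 ≤ Fintype.card ι * S :=
    hsum fun i ↦ le_trans (by gcongr; exact W.norm_orthogonalProjectionOnto_apply_le _) (hS i)
  have hWperp : ∑ i, ‖Wᗮ.orthogonalProjectionOnto (v i)‖ ^ 2 ≤ Fintype.card ι * D := by
    refine hsum fun i ↦ le_of_eq_of_le ?_ (hD i)
    rw [W.orthogonalProjectionOnto_orthogonal]
    rfl
  have hW' : ((∑ i, ‖W.orthogonalProjectionOnto (v i)‖ ^ 2) / finrank ℝ W) ^ finrank ℝ W ≤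
      (Fintype.card ι * S / finrank ℝ W) ^ finrank ℝ W := by gcongr
  exact mul_le_mul hW' (by gcongr) (by positivity) (le_trans (by positivity) hW')

end InnerProductSpace

theorem abs_le_of_lowerTriangular {A : ℕ → ℕ → ℝ} {τ : ℕ → ℝ} (hτ0 : ∀ n, 0 ≤ τ n)
    (hlower : ∀ i j, i < j → A i j = 0) (hdiag : ∀ n, |A n n| ≤ τ n)
    (hbelow : ∀ i j, j < i → |A i j| ≤ τ j) (i j : ℕ) : |A i j| ≤ τ j := by
  rcases lt_trichotomy i j with hij | rfl | hji
  · rw [hlower i j hij, abs_zero]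
    exact hτ0 j
  · exact hdiag i
  · exact hbelow i j hji

theorem stmt_12_general (A : ℕ → ℕ → ℝ) (τ γ d : ℕ → ℝ)
    (hτ0 : ∀ n, 0 ≤ τ n) (hγ0 : ∀ n, 0 ≤ γ n)
    (hlower : ∀ i j : ℕ, i < j → A i j = 0)
    (hQ1 : ∀ n : ℕ, γ n * τ n ≤ |A n n| ∧ |A n n| ≤ τ n)
    (hQ2 : ∀ i j : ℕ, j < i → |A i j| ≤ τ j)
    (K N m : ℕ)
    (W : Submodule ℝ (EuclideanSpace ℝ (Fin K)))
    (hW : Module.finrank ℝ W = m)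
    (g : Fin K → EuclideanSpace ℝ (Fin K))
    (hg : ∀ i j : Fin K, g i j = A (N + 1 + i) (N + 1 + j))
    (hrows : ∀ i : Fin K,
      ‖g i - (W.orthogonalProjectionOnto (g i) : EuclideanSpace ℝ (Fin K))‖ ≤
        Real.sqrt K * d m) :
    ∏ i ∈ Finset.Icc 1 K, (γ (N + i)) ^ 2 * (τ (N + i)) ^ 2 ≤
      2 ^ K * (K : ℝ) ^ (K - m) * (∑ i ∈ Finset.Icc 1 K, (τ (N + i)) ^ 2) ^ m *
        (d m) ^ (2 * (K - m)) := by
  set T := ∑ i ∈ Icc 1 K, τ (N + i) ^ 2 with hT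
  have hT0 : 0 ≤ T := sum_nonneg fun _ _ ↦ sq_nonneg _
  have hg' (i j : Fin K) : g i j = A (N + (i + 1)) (N + (j + 1)) := by
    simp only [hg, add_assoc, add_comm 1]
  have hentry := abs_le_of_lowerTriangular hτ0 hlower (fun n ↦ (hQ1 n).2) hQ2
  have hrow (i : Fin K) : ‖g i‖ ^ 2 ≤ T := by
    rw [hT, sum_Icc_eq_sum_fin_succ]
    exact EuclideanSpace.norm_sq_le_sum_sq _ fun j ↦ hg' i j ▸ hentry _ _
  have hdiag : ∏ i ∈ Icc 1 K, γ (N + i) ^ 2 * τ (N + i) ^ 2 ≤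
      ((EuclideanSpace.basisFun (Fin K) ℝ).toBasis.det g) ^ 2 := by
    simp_rw [prod_Icc_eq_prod_fin_succ, ← mul_pow]
    exact EuclideanSpace.sq_prod_le_basisFun_det_sq g
      (fun i j hij ↦ by rw [hg']; exact hlower _ _ (by omega))
      (fun _ ↦ mul_nonneg (hγ0 _) (hτ0 _)) (fun i ↦ hg' i i ▸ (hQ1 _).1)
  obtain ⟨k, hk, rfl⟩ : ∃ k, finrank ℝ Wᗮ = k ∧ K = m + k :=
    ⟨_, rfl, by rw [← hW, W.finrank_add_finrank_orthogonal, finrank_euclideanSpace_fin]⟩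
  set n : ℝ := ((m + k : ℕ) : ℝ)
  calc _ ≤ ((EuclideanSpace.basisFun (Fin (m + k)) ℝ).toBasis.det g) ^ 2 := hdiag
    _ ≤ (n * T / m) ^ m * (n * (√n * d m) ^ 2 / k) ^ k := by
      simpa only [hW, hk, Fintype.card_fin] using W.det_sq_le_of_norm_le _ g hrow
        fun i ↦ pow_le_pow_left₀ (norm_nonneg _) (hrows i) 2
    _ = (n / m) ^ m * (n / k) ^ k * (T ^ m * (n * d m ^ 2) ^ k) := by
      rw [mul_pow, Real.sq_sqrt (Nat.cast_nonneg _)]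
      ring
    _ ≤ 2 ^ (m + k) * (T ^ m * (n * d m ^ 2) ^ k) :=
      mul_le_mul_of_nonneg_right (Real.add_div_pow_mul_add_div_pow_le m k) (by positivity)
    _ = _ := by rw [Nat.add_sub_cancel_left, pow_mul]; ring

theorem stmt_12 (A : ℕ → ℕ → ℝ) (τ γ d : ℕ → ℝ)
    (hτ0 : ∀ n, 0 ≤ τ n) (hγ0 : ∀ n, 0 ≤ γ n) (hd0 : ∀ n, 0 ≤ d n)
    (hlower : ∀ i j : ℕ, i < j → A i j = 0)
    (hQ1 : ∀ n : ℕ, γ n * τ n ≤ |A n n| ∧ |A n n| ≤ τ n)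
    (hQ2 : ∀ i j : ℕ, j < i → |A i j| ≤ τ j)
    (K N m : ℕ) (hK : 2 ≤ K) (hm : 1 ≤ m) (hmK : m < K)
    (W : Submodule ℝ (EuclideanSpace ℝ (Fin K)))
    (hW : Module.finrank ℝ W = m)
    (g : Fin K → EuclideanSpace ℝ (Fin K))
    (hg : ∀ i j : Fin K, g i j = A (N + 1 + i) (N + 1 + j))
    (hrows : ∀ i : Fin K,
      ‖g i - (W.orthogonalProjectionOnto (g i) : EuclideanSpace ℝ (Fin K))‖ ≤
        Real.sqrt K * d m) :
    ∏ i ∈ Finset.Icc 1 K, (γ (N + i)) ^ 2 * (τ (N + i)) ^ 2 ≤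
      2 ^ K * (K : ℝ) ^ (K - m) * (∑ i ∈ Finset.Icc 1 K, (τ (N + i)) ^ 2) ^ m *
        (d m) ^ (2 * (K - m)) :=
  stmt_12_general A τ γ d hτ0 hγ0 hlower hQ1 hQ2 K N m W hW g hg hrows
end

section
/- Let (τ_n)_{n≥1} be a nonincreasing sequence in [0,1], (d_n)_{n≥1} nonnegative with d_n ≤ C₀ e^{−c₁ n^α} for all n (C₀ ≥ 1, c₁, α > 0), and γ ∈ (0,1] a constant. Assume τ_{2ℓ} ≤ √2 γ^{-1} √(d_ℓ) for all ℓ ≥ 1 (Hilbert-space weak greedy with constant parameter). Then for all n ≥ 2, τ_n ≤ C₀ √2 γ^{-1} e^{−c₂ n^α} with c₂ = c₁ 2^{−2α−1}. -/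
/-!
Monotonicity gives `τ n ≤ τ (2 ⌊n/2⌋)`, and the recursion bounds this by `√2 γ⁻¹ √(d ⌊n/2⌋)`.
Taking the square root halves the decay rate of `d`, and `n ≤ 4 ⌊n/2⌋` for `n ≥ 2` costs the
further factor `4^{-α} = 2^{-2α}` in the exponent.
-/

open Real

lemma sqrt_mul_exp_le {C t : ℝ} (hC : 1 ≤ C) : √(C * exp t) ≤ C * exp (t / 2) := by
  rw [sqrt_mul (by linarith), ← exp_half]
  gcongr
  exact sqrt_le_self_iff.mpr (Or.inr hC)

lemma two_rpow_mul_rpow_le {x y α : ℝ} (hx : 0 ≤ x) (hxy : x ≤ 4 * y) (hα : 0 ≤ α) :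
    2 ^ (-(2 * α) - 1) * x ^ α ≤ y ^ α / 2 := by
  have hy : 0 ≤ y := by linarith
  have h4 : (4 : ℝ) ^ α = 2 ^ (2 * α) := by
    rw [rpow_mul (by norm_num : (0 : ℝ) ≤ 2)]; norm_num
  have hxα : x ^ α ≤ 2 ^ (2 * α) * y ^ α := by
    calc x ^ α ≤ (4 * y) ^ α := rpow_le_rpow hx hxy hα
      _ = 2 ^ (2 * α) * y ^ α := by rw [mul_rpow (by norm_num) hy, h4]
  rw [rpow_sub two_pos, rpow_neg zero_le_two, rpow_one]
  have h2 : (0 : ℝ) < 2 ^ (2 * α) := rpow_pos_of_pos two_pos _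
  calc (2 ^ (2 * α))⁻¹ / 2 * x ^ α ≤ (2 ^ (2 * α))⁻¹ / 2 * (2 ^ (2 * α) * y ^ α) := by gcongr
    _ = y ^ α / 2 := by field_simp

theorem stmt_17_general (τ d : ℕ → ℝ) (C₀ c₁ α γ : ℝ)
    (hmono : ∀ m n : ℕ, m ≤ n → τ n ≤ τ m)
    (hC₀ : 1 ≤ C₀) (hc₁ : 0 < c₁) (hα : 0 < α)
    (hγ0 : 0 < γ)
    (hd : ∀ n : ℕ, 1 ≤ n → d n ≤ C₀ * Real.exp (-c₁ * (n : ℝ) ^ α))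
    (hrec : ∀ ℓ : ℕ, 1 ≤ ℓ → τ (2 * ℓ) ≤ Real.sqrt 2 * γ⁻¹ * Real.sqrt (d ℓ)) :
    ∀ n : ℕ, 2 ≤ n →
      τ n ≤ C₀ * Real.sqrt 2 * γ⁻¹ *
        Real.exp (-(c₁ * (2 : ℝ) ^ (-(2 * α) - 1)) * (n : ℝ) ^ α) := by
  intro n hn
  have hℓ : 1 ≤ n / 2 := (Nat.one_le_div_iff two_pos).mpr hn
  have hn4 : (n : ℝ) ≤ 4 * (n / 2 : ℕ) := by exact_mod_cast (by omega : n ≤ 4 * (n / 2))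
  have hexp : -c₁ * ((n / 2 : ℕ) : ℝ) ^ α / 2 ≤ -(c₁ * 2 ^ (-(2 * α) - 1)) * (n : ℝ) ^ α := by
    have := mul_le_mul_of_nonneg_left (two_rpow_mul_rpow_le n.cast_nonneg hn4 hα.le) hc₁.le
    linarith
  calc τ n ≤ τ (2 * (n / 2)) := hmono _ _ (Nat.mul_div_le n 2)
    _ ≤ √2 * γ⁻¹ * √(d (n / 2)) := hrec _ hℓ
    _ ≤ √2 * γ⁻¹ * (C₀ * exp (-c₁ * ((n / 2 : ℕ) : ℝ) ^ α / 2)) := by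
      gcongr
      exact (sqrt_le_sqrt (hd _ hℓ)).trans (sqrt_mul_exp_le hC₀)
    _ ≤ √2 * γ⁻¹ * (C₀ * exp (-(c₁ * 2 ^ (-(2 * α) - 1)) * (n : ℝ) ^ α)) := by gcongr
    _ = _ := by ring

theorem stmt_17 (τ d : ℕ → ℝ) (C₀ c₁ α γ : ℝ)
    (hτ0 : ∀ n, 0 ≤ τ n) (hτ1 : ∀ n, τ n ≤ 1)
    (hmono : ∀ m n : ℕ, m ≤ n → τ n ≤ τ m)
    (hd0 : ∀ n, 0 ≤ d n)
    (hC₀ : 1 ≤ C₀) (hc₁ : 0 < c₁) (hα : 0 < α)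
    (hγ0 : 0 < γ) (hγ1 : γ ≤ 1)
    (hd : ∀ n : ℕ, 1 ≤ n → d n ≤ C₀ * Real.exp (-c₁ * (n : ℝ) ^ α))
    (hrec : ∀ ℓ : ℕ, 1 ≤ ℓ → τ (2 * ℓ) ≤ Real.sqrt 2 * γ⁻¹ * Real.sqrt (d ℓ)) :
    ∀ n : ℕ, 2 ≤ n →
      τ n ≤ C₀ * Real.sqrt 2 * γ⁻¹ *
        Real.exp (-(c₁ * (2 : ℝ) ^ (-(2 * α) - 1)) * (n : ℝ) ^ α) :=
  stmt_17_general τ d C₀ c₁ α γ hmono hC₀ hc₁ hα hγ0 hd hrec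
end

section
/- Let X be a Hilbert space, X_n ⊆ X an n-dimensional subspace, and σ_0,…,σ_{n−1} ∈ X' linearly independent functionals such that the interpolation operator J_n : X → X_n defined by σ_i(J_n[φ]) = σ_i(φ), i = 0,…,n−1, is well defined. Then the operator norm Λ_n of J_n satisfies Λ_n = 1/β_n, where β_n = inf_{φ ∈ X_n, φ ≠ 0} sup_{σ ∈ span{σ_0,…,σ_{n−1}}, σ ≠ 0} σ(φ) / (‖φ‖ ‖σ‖_{X'}). -/
/-!
Let `Y` be the span of the Riesz representers of the `σ i` and `P` the orthogonal projection onto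
`Y`. By Cauchy–Schwarz, with equality for the functional represented by `P φ`, the inner supremum
defining `β` equals `‖P φ‖ / ‖φ‖`, so `β` is the largest constant with `β ‖φ‖ ≤ ‖P φ‖` on `Xn`.
The interpolation conditions say exactly that `J φ - φ ⊥ Y`, i.e. `P (J φ) = P φ`. Hence
`β ‖J φ‖ ≤ ‖P φ‖ ≤ ‖φ‖`, giving `‖J‖ ≤ 1 / β`; conversely `P` is injective on `Xn` and `J` inverts
it there, so `‖φ‖ = ‖J (P φ)‖ ≤ ‖J‖ ‖P φ‖` for `φ ∈ Xn`, giving `1 / ‖J‖ ≤ β`.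
-/

open InnerProductSpace Submodule

section

variable {X : Type*} [NormedAddCommGroup X] [InnerProductSpace ℝ X]

theorem starProjection_span_eq_of_inner_eq {s : Set X} [(span ℝ s).HasOrthogonalProjection]
    {x x' : X} (h : ∀ u ∈ s, ⟪u, x⟫_ℝ = ⟪u, x'⟫_ℝ) :
    (span ℝ s).starProjection x = (span ℝ s).starProjection x' := by
  rw [← sub_eq_zero, ← map_sub, starProjection_apply_eq_zero_iff, ← span_singleton_le_iff_mem,
    ← isOrtho_iff_le, isOrtho_span]
  simpa [inner_sub_left, sub_eq_zero, real_inner_comm] using h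

theorem inner_starProjection_of_mem (Y : Submodule ℝ X) [Y.HasOrthogonalProjection] {y : X}
    (hy : y ∈ Y) (x : X) : ⟪y, Y.starProjection x⟫_ℝ = ⟪y, x⟫_ℝ := by
  rw [← inner_starProjection_left_eq_right, starProjection_eq_self_iff.2 hy]

section Dual

variable [CompleteSpace X]

theorem toDual_mem_span_range_iff {ι : Type*} (σ : ι → X →L[ℝ] ℝ) (y : X) :
    toDual ℝ X y ∈ span ℝ (Set.range σ) ↔
      y ∈ span ℝ (Set.range fun i ↦ (toDual ℝ X).symm (σ i)) := by
  have hspan : span ℝ (Set.range σ) =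
      (span ℝ (Set.range fun i ↦ (toDual ℝ X).symm (σ i))).map (toDual ℝ X).toLinearEquiv.toLinearMap := by
    rw [map_span, ← Set.range_comp]
    simp only [LinearEquiv.coe_coe, LinearIsometryEquiv.coe_toLinearEquiv, Function.comp_def,
      LinearIsometryEquiv.apply_symm_apply]
  rw [hspan, mem_map_equiv, LinearIsometryEquiv.coe_symm_toLinearEquiv,
    LinearIsometryEquiv.symm_apply_apply]

variable (Y : Submodule ℝ X) [Y.HasOrthogonalProjection]

theorem apply_eq_inner_starProjection {s : X →L[ℝ] ℝ} (hs : (toDual ℝ X).symm s ∈ Y) (x : X) :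
    s x = ⟪(toDual ℝ X).symm s, Y.starProjection x⟫_ℝ := by
  rw [inner_starProjection_of_mem Y hs, toDual_symm_apply]

theorem apply_le_norm_mul_norm_starProjection {s : X →L[ℝ] ℝ} (hs : (toDual ℝ X).symm s ∈ Y)
    (x : X) : s x ≤ ‖s‖ * ‖Y.starProjection x‖ := by
  rw [apply_eq_inner_starProjection Y hs, ← LinearIsometryEquiv.norm_map (toDual ℝ X).symm s]
  exact real_inner_le_norm _ _

theorem iSup_apply_div_eq_norm_starProjection_div (V : Submodule ℝ (X →L[ℝ] ℝ))
    (hV : ∀ y, toDual ℝ X y ∈ V ↔ y ∈ Y) (x : X) :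
    ⨆ s : {s : X →L[ℝ] ℝ // s ∈ V ∧ s ≠ 0}, s.1 x / (‖x‖ * ‖s.1‖) =
      ‖Y.starProjection x‖ / ‖x‖ := by
  have hmem : ∀ s ∈ V, (toDual ℝ X).symm s ∈ Y := fun s hs ↦ by
    rwa [← hV, LinearIsometryEquiv.apply_symm_apply]
  have hle : ∀ s : {s : X →L[ℝ] ℝ // s ∈ V ∧ s ≠ 0},
      s.1 x / (‖x‖ * ‖s.1‖) ≤ ‖Y.starProjection x‖ / ‖x‖ := fun ⟨s, hsV, hs0⟩ ↦ by
    rw [mul_comm, ← div_div]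
    gcongr
    rw [div_le_iff₀' (norm_pos_iff.2 hs0)]
    exact apply_le_norm_mul_norm_starProjection Y (hmem s hsV) x
  refine le_antisymm (Real.iSup_le hle (by positivity)) ?_
  set p := Y.starProjection x with hp_def
  by_cases hp : p = 0
  · rw [hp, norm_zero, zero_div]
    refine Real.iSup_nonneg fun s ↦ ?_
    rw [apply_eq_inner_starProjection Y (hmem _ s.2.1), ← hp_def, hp, inner_zero_right, zero_div]
  · have hpV : toDual ℝ X p ∈ V := (hV p).2 (starProjection_apply_mem Y x)
    have hp0 : toDual ℝ X p ≠ 0 := by simpa using hp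
    refine le_of_eq_of_le ?_ (le_ciSup ⟨_, Set.forall_mem_range.2 hle⟩ ⟨_, hpV, hp0⟩)
    rw [toDual_apply_apply, ← inner_starProjection_of_mem Y (starProjection_apply_mem Y x),
      real_inner_self_eq_norm_sq, LinearIsometryEquiv.norm_map, sq, mul_comm ‖x‖, ← div_div,
      mul_div_cancel_right₀ _ (norm_ne_zero_iff.2 hp)]

end Dual

section Interpolation

variable (Y : Submodule ℝ X) [Y.HasOrthogonalProjection] {Xn : Submodule ℝ X} {J : X →L[ℝ] X}
  (hJmem : ∀ x, J x ∈ Xn) (hPJ : ∀ x, Y.starProjection (J x) = Y.starProjection x)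
include hJmem hPJ

theorem opNorm_le_one_div_of_mul_norm_le {β : ℝ} (hβpos : 0 < β)
    (hβ : ∀ x ∈ Xn, β * ‖x‖ ≤ ‖Y.starProjection x‖) : ‖J‖ ≤ 1 / β := by
  refine J.opNorm_le_bound (by positivity) fun x ↦ ?_
  rw [div_mul_eq_mul_div, one_mul, le_div_iff₀' hβpos]
  calc β * ‖J x‖ ≤ ‖Y.starProjection (J x)‖ := hβ _ (hJmem x)
    _ = ‖Y.starProjection x‖ := by rw [hPJ]
    _ ≤ ‖x‖ := Y.norm_starProjection_apply_le x

theorem apply_starProjection_eq_self (hinj : ∀ x ∈ Xn, Y.starProjection x = 0 → x = 0) {x : X}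
    (hx : x ∈ Xn) : J (Y.starProjection x) = x := by
  refine sub_eq_zero.1 (hinj _ (Xn.sub_mem (hJmem _) hx) ?_)
  rw [map_sub, hPJ, starProjection_eq_self_iff.2 (Y.starProjection_apply_mem x), sub_self]

theorem opNorm_eq_one_div_iInf_norm_starProjection_div {β : ℝ}
    (hβ : β = ⨅ x : {x : X // x ∈ Xn ∧ x ≠ 0}, ‖Y.starProjection x.1‖ / ‖x.1‖) (hβpos : 0 < β) :
    ‖J‖ = 1 / β := by
  have hbdd : BddBelow (Set.range fun x : {x : X // x ∈ Xn ∧ x ≠ 0} ↦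
      ‖Y.starProjection x.1‖ / ‖x.1‖) := ⟨0, Set.forall_mem_range.2 fun _ ↦ by positivity⟩
  have hbound : ∀ x ∈ Xn, β * ‖x‖ ≤ ‖Y.starProjection x‖ := fun x hx ↦ by
    rcases eq_or_ne x 0 with rfl | hx0
    · simp
    rw [← le_div_iff₀ (norm_pos_iff.2 hx0), hβ]
    exact ciInf_le hbdd ⟨x, hx, hx0⟩
  have hinj : ∀ x ∈ Xn, Y.starProjection x = 0 → x = 0 := fun x hx hPx ↦
    norm_le_zero_iff.1 <| nonpos_of_mul_nonpos_right (by simpa [hPx] using hbound x hx) hβpos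
  have hlower : ∀ x ∈ Xn, ‖x‖ ≤ ‖J‖ * ‖Y.starProjection x‖ := fun x hx ↦
    calc ‖x‖ = ‖J (Y.starProjection x)‖ := by rw [apply_starProjection_eq_self Y hJmem hPJ hinj hx]
      _ ≤ ‖J‖ * ‖Y.starProjection x‖ := J.le_opNorm _
  have hne : Nonempty {x : X // x ∈ Xn ∧ x ≠ 0} := by
    by_contra h
    rw [not_nonempty_iff] at h
    rw [hβ, Real.iInf_of_isEmpty] at hβpos
    exact hβpos.false
  obtain ⟨x₀, hx₀, hx₀0⟩ := hne.some
  have hJpos : 0 < ‖J‖ :=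
    pos_of_mul_pos_left ((norm_pos_iff.2 hx₀0).trans_le (hlower x₀ hx₀)) (norm_nonneg _)
  refine le_antisymm (opNorm_le_one_div_of_mul_norm_le Y hJmem hPJ hβpos hbound) ?_
  rw [one_div_le hβpos hJpos, hβ]
  refine le_ciInf fun ⟨x, hx, hx0⟩ ↦ ?_
  rw [div_le_div_iff₀ hJpos (norm_pos_iff.2 hx0), one_mul, mul_comm]
  exact hlower x hx

end Interpolation

end

theorem stmt_18_general {X : Type*} [NormedAddCommGroup X] [InnerProductSpace ℝ X] [CompleteSpace X]
    (n : ℕ) (Xn : Submodule ℝ X)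
    (σ : Fin n → (X →L[ℝ] ℝ))
    (J : X →L[ℝ] X) (hJmem : ∀ φ : X, J φ ∈ Xn)
    (hJinterp : ∀ (φ : X) (i : Fin n), σ i (J φ) = σ i φ)
    (β : ℝ)
    (hβ : β = ⨅ φ : {φ : X // φ ∈ Xn ∧ φ ≠ 0},
        ⨆ s : {s : X →L[ℝ] ℝ // s ∈ Submodule.span ℝ (Set.range σ) ∧ s ≠ 0},
          s.1 φ.1 / (‖φ.1‖ * ‖s.1‖))
    (hβpos : 0 < β) :
    ‖J‖ = 1 / β := by
  set r : Fin n → X := fun i ↦ (toDual ℝ X).symm (σ i)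
  have : FiniteDimensional ℝ (span ℝ (Set.range r)) :=
    FiniteDimensional.span_of_finite ℝ (Set.finite_range r)
  have hPJ (φ : X) : (span ℝ (Set.range r)).starProjection (J φ) =
      (span ℝ (Set.range r)).starProjection φ :=
    starProjection_span_eq_of_inner_eq <| Set.forall_mem_range.2 fun i ↦ by
      simp only [r, toDual_symm_apply, hJinterp]
  refine opNorm_eq_one_div_iInf_norm_starProjection_div _ hJmem hPJ ?_ hβpos
  simpa only [iSup_apply_div_eq_norm_starProjection_div _ _ (toDual_mem_span_range_iff σ)] using hβ

theorem stmt_18 {X : Type*} [NormedAddCommGroup X] [InnerProductSpace ℝ X] [CompleteSpace X]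
    (n : ℕ) (Xn : Submodule ℝ X) (hXn : Module.finrank ℝ Xn = n)
    (σ : Fin n → (X →L[ℝ] ℝ)) (hσ : LinearIndependent ℝ σ)
    (J : X →L[ℝ] X) (hJmem : ∀ φ : X, J φ ∈ Xn)
    (hJinterp : ∀ (φ : X) (i : Fin n), σ i (J φ) = σ i φ)
    (β : ℝ)
    (hβ : β = ⨅ φ : {φ : X // φ ∈ Xn ∧ φ ≠ 0},
        ⨆ s : {s : X →L[ℝ] ℝ // s ∈ Submodule.span ℝ (Set.range σ) ∧ s ≠ 0},
          s.1 φ.1 / (‖φ.1‖ * ‖s.1‖))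
    (hβpos : 0 < β) :
    ‖J‖ = 1 / β :=
  stmt_18_general n Xn σ J hJmem hJinterp β hβ hβpos
end

section
/- Let (τ_n)_{n≥1} be a nonincreasing sequence in [0,1], d_n ≤ C₀ n^{−α} with C₀, α > 0, and γ ∈ (0,1] constant, satisfying the Hilbert-space recursion τ_{N+K} ≤ γ^{-1} √2 · τ_{N+1}^{m/K} d_m^{1−m/K} for all N ≥ 0, K ≥ 2, 1 ≤ m < K, together with τ₁ ≤ 2(1 + η^{-1}) d₁ for some η ∈ (0,1]. Then there is an explicit constant, namely β_n as in Lemma 6.7 of the paper specialized to constant γ (in particular β_n ≤ 2^{3α+1} γ^{-2} for n ≥ 2 when 2(1+η^{-1}) ≤ 2^{3α+1}γ^{-2}), such that τ_n ≤ C₀ 2^{3α+1} γ^{-2} n^{−α} for all n ≥ 2. -/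
/-!
Strong induction on `n ≥ 1` for the bound `τ n ≤ C n^(-α)` with `C = C₀ 2^(3α+1) γ⁻²`.
For `n ≥ 2` write `n = N + 2m` with `m ≈ n/4`, so that `n² ≤ 8 (N+1) m`, and use the recursion
with `K = 2m`, where both exponents are `1/2`:
`τ n ≤ γ⁻¹ √(2 τ(N+1) d m) ≤ γ⁻¹ √(2 · 8^α C₀ C) n^(-α) = C n^(-α)`.
The last equality is why `C` is chosen as it is: it is the fixed point of `C ↦ γ⁻¹ √(2 · 8^α C₀ C)`.
-/

open Real

lemma le_inv_mul_sqrt_of_rec_half {τ d : ℕ → ℝ} {γ : ℝ} (hτ0 : ∀ n, 0 ≤ τ n)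
    (hrec : ∀ N K m : ℕ, 2 ≤ K → 1 ≤ m → m < K →
      τ (N + K) ≤ γ⁻¹ * √2 * τ (N + 1) ^ ((m : ℝ) / K) * d m ^ (1 - (m : ℝ) / K))
    (N : ℕ) {m : ℕ} (hm : 1 ≤ m) :
    τ (N + 2 * m) ≤ γ⁻¹ * √(2 * τ (N + 1) * d m) := by
  have hhalf : (m : ℝ) / (2 * m : ℕ) = 1 / 2 := by
    have : (m : ℝ) ≠ 0 := by positivity
    push_cast; field_simp
  have h := hrec N (2 * m) m (by omega) hm (by omega)
  rwa [hhalf, show (1 : ℝ) - 1 / 2 = 1 / 2 by norm_num, ← sqrt_eq_rpow, ← sqrt_eq_rpow,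
    mul_assoc _ √(τ (N + 1)), mul_assoc, ← sqrt_mul (hτ0 _), ← sqrt_mul zero_le_two,
    ← mul_assoc] at h

lemma exists_eq_add_two_mul_sq_le {n : ℕ} (hn : 2 ≤ n) :
    ∃ N m : ℕ, 1 ≤ m ∧ n = N + 2 * m ∧ n ^ 2 ≤ 8 * ((N + 1) * m) := by
  obtain ⟨N, m, hm, rfl, hlo, hhi⟩ :
      ∃ N m : ℕ, 1 ≤ m ∧ n = N + 2 * m ∧ N ≤ 2 * m ∧ 2 * m ≤ N + 3 :=
    ⟨n - 2 * ((n + 3) / 4), (n + 3) / 4, by omega, by omega, by omega, by omega⟩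
  refine ⟨N, m, hm, rfl, ?_⟩
  -- `8(N+1)m - (N+2m)² = 8m - (2m-N)²`, and `0 ≤ 2m - N ≤ 3`
  zify at hlo hhi ⊢
  nlinarith [mul_nonneg (sub_nonneg.2 hlo) (by linarith : (0 : ℤ) ≤ N + 3 - 2 * m)]

lemma rpow_neg_mul_le_of_sq_le {a b x α : ℝ} (hx : 0 < x) (hα : 0 ≤ α)
    (h : x ^ 2 ≤ 8 * (a * b)) :
    (a * b) ^ (-α) ≤ 2 ^ (3 * α) * (x ^ (-α)) ^ 2 := by
  have h8 : (8 : ℝ) ^ α = 2 ^ (3 * α) := by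
    rw [rpow_mul zero_le_two]; norm_num
  calc (a * b) ^ (-α) ≤ (x ^ 2 / 8) ^ (-α) :=
        rpow_le_rpow_of_nonpos (by positivity) (by linarith) (by linarith)
    _ = 2 ^ (3 * α) * (x ^ (-α)) ^ 2 := by
        rw [div_rpow (by positivity) (by norm_num), rpow_neg (by norm_num : (0 : ℝ) ≤ 8),
          div_inv_eq_mul, h8, rpow_pow_comm hx.le, mul_comm]

lemma inv_mul_sqrt_le {t e a b x C₀ α γ : ℝ} (hγ : 0 < γ) (hC₀ : 0 ≤ C₀) (hα : 0 ≤ α)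
    (ha : 0 < a) (hb : 0 < b) (hx : 0 < x) (hx2 : x ^ 2 ≤ 8 * (a * b))
    (he0 : 0 ≤ e)
    (ht : t ≤ C₀ * 2 ^ (3 * α + 1) * γ⁻¹ ^ 2 * a ^ (-α)) (he : e ≤ C₀ * b ^ (-α)) :
    γ⁻¹ * √(2 * t * e) ≤ C₀ * 2 ^ (3 * α + 1) * γ⁻¹ ^ 2 * x ^ (-α) := by
  set C := C₀ * 2 ^ (3 * α + 1) * γ⁻¹ ^ 2 with hC
  rw [inv_mul_le_iff₀ hγ, sqrt_le_iff]
  refine ⟨by positivity, ?_⟩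
  calc 2 * t * e ≤ 2 * (C * a ^ (-α)) * (C₀ * b ^ (-α)) := by gcongr
    _ = 2 * C * C₀ * (a * b) ^ (-α) := by rw [mul_rpow ha.le hb.le]; ring
    _ ≤ 2 * C * C₀ * (2 ^ (3 * α) * (x ^ (-α)) ^ 2) := by
        gcongr; exact rpow_neg_mul_le_of_sq_le hx hα hx2
    _ = (γ * (C * x ^ (-α))) ^ 2 := by
        rw [hC, rpow_add_one two_ne_zero]; field_simp

theorem stmt_19_general (τ d : ℕ → ℝ) (C₀ α γ η : ℝ)
    (hτ0 : ∀ n, 0 ≤ τ n)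
    (hd0 : ∀ n, 0 ≤ d n)
    (hC₀ : 0 < C₀) (hα : 0 < α)
    (hγ0 : 0 < γ)
    (hd : ∀ n : ℕ, 1 ≤ n → d n ≤ C₀ * (n : ℝ) ^ (-α))
    (hrec : ∀ N K m : ℕ, 2 ≤ K → 1 ≤ m → m < K →
      τ (N + K) ≤ γ⁻¹ * Real.sqrt 2 * (τ (N + 1)) ^ ((m : ℝ) / K) *
        (d m) ^ (1 - (m : ℝ) / K))
    (hτ1' : τ 1 ≤ 2 * (1 + η⁻¹) * d 1)
    (hcomp : 2 * (1 + η⁻¹) ≤ (2 : ℝ) ^ (3 * α + 1) * γ⁻¹ ^ 2) :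
    ∀ n : ℕ, 2 ≤ n →
      τ n ≤ C₀ * (2 : ℝ) ^ (3 * α + 1) * γ⁻¹ ^ 2 * (n : ℝ) ^ (-α) := by
  suffices h : ∀ n : ℕ, 1 ≤ n → τ n ≤ C₀ * 2 ^ (3 * α + 1) * γ⁻¹ ^ 2 * (n : ℝ) ^ (-α) from
    fun n hn ↦ h n (by omega)
  intro n
  induction n using Nat.strong_induction_on with
  | _ n ih =>
    intro hn
    obtain rfl | hn2 := eq_or_lt_of_le hn
    · have hd1 : d 1 ≤ C₀ := by simpa using hd 1 le_rfl
      calc τ 1 ≤ 2 ^ (3 * α + 1) * γ⁻¹ ^ 2 * d 1 :=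
            hτ1'.trans (mul_le_mul_of_nonneg_right hcomp (hd0 1))
        _ ≤ 2 ^ (3 * α + 1) * γ⁻¹ ^ 2 * C₀ := by gcongr
        _ = C₀ * 2 ^ (3 * α + 1) * γ⁻¹ ^ 2 * ((1 : ℕ) : ℝ) ^ (-α) := by
            rw [Nat.cast_one, one_rpow]; ring
    obtain ⟨N, m, hm, rfl, hsq⟩ := exists_eq_add_two_mul_sq_le hn2
    have hsq' : ((N + 2 * m : ℕ) : ℝ) ^ 2 ≤ 8 * (((N + 1 : ℕ) : ℝ) * m) := by exact_mod_cast hsq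
    refine (le_inv_mul_sqrt_of_rec_half hτ0 hrec N hm).trans ?_
    exact inv_mul_sqrt_le hγ0 hC₀.le hα.le (by positivity) (by positivity) (by positivity) hsq'
      (hd0 m) (ih (N + 1) (by omega) (by omega)) (hd m hm)

theorem stmt_19 (τ d : ℕ → ℝ) (C₀ α γ η : ℝ)
    (hτ0 : ∀ n, 0 ≤ τ n) (hτ1 : ∀ n, τ n ≤ 1)
    (hmono : ∀ m n : ℕ, m ≤ n → τ n ≤ τ m)
    (hd0 : ∀ n, 0 ≤ d n)
    (hC₀ : 0 < C₀) (hα : 0 < α)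
    (hγ0 : 0 < γ) (hγ1 : γ ≤ 1)
    (hη0 : 0 < η) (hη1 : η ≤ 1)
    (hd : ∀ n : ℕ, 1 ≤ n → d n ≤ C₀ * (n : ℝ) ^ (-α))
    (hrec : ∀ N K m : ℕ, 2 ≤ K → 1 ≤ m → m < K →
      τ (N + K) ≤ γ⁻¹ * Real.sqrt 2 * (τ (N + 1)) ^ ((m : ℝ) / K) *
        (d m) ^ (1 - (m : ℝ) / K))
    (hτ1' : τ 1 ≤ 2 * (1 + η⁻¹) * d 1)
    (hcomp : 2 * (1 + η⁻¹) ≤ (2 : ℝ) ^ (3 * α + 1) * γ⁻¹ ^ 2) :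
    ∀ n : ℕ, 2 ≤ n →
      τ n ≤ C₀ * (2 : ℝ) ^ (3 * α + 1) * γ⁻¹ ^ 2 * (n : ℝ) ^ (-α) :=
  stmt_19_general τ d C₀ α γ η hτ0 hd0 hC₀ hα hγ0 hd hrec hτ1' hcomp
end
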